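/- Let X be a Banach space and 1 < p < ∞. If X has property (P_p) — every seminormalized weakly null sequence in X admits a subsequence that is a basic sequence equivalent to the unit vector basis of ℓp whose closed linear span is complemented in X — then X has property (R_p): every relatively weakly compact subset A of X that is not relatively norm compact admits a bounded operator u : X → ℓp such that u(A) is not relatively norm compact. -/

import Mathlib

open Filter Topology NormedSpace
open scoped ENNReal NNReal

/-- `Z`, together with the continuous bilinear map `m`, is (a realization of) the projective
tensor product `X ⊗̂π Y`: the span of elementary tensors is dense, and every continuous bilinear
map into a Banach space lifts to a continuous linear map on `Z` with the same norm. -/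
structure IsProjTensorProduct (X Y Z : Type*) [NormedAddCommGroup X] [NormedSpace ℝ X]
    [NormedAddCommGroup Y] [NormedSpace ℝ Y] [NormedAddCommGroup Z] [NormedSpace ℝ Z]
    (m : X →L[ℝ] Y →L[ℝ] Z) : Prop where
  dense_span : Dense (Submodule.span ℝ {z : Z | ∃ x y, m x y = z} : Set Z)
  lift : ∀ (W : Type) [NormedAddCommGroup W] [NormedSpace ℝ W] [CompleteSpace W]
    (B : X →L[ℝ] Y →L[ℝ] W), ∃ T : Z →L[ℝ] W, ‖T‖ = ‖B‖ ∧ ∀ x y, T (m x y) = B x y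

/-- A set is relatively weakly compact if its closure in the weak topology is weakly compact. -/
def RelWeakCompact (X : Type*) [SeminormedAddCommGroup X] [NormedSpace ℝ X] (A : Set X) : Prop :=
  IsCompact (closure ((toWeakSpace ℝ X) '' A))

/-- A set is relatively norm compact if its norm closure is compact. -/
def RelNormCompact (X : Type*) [SeminormedAddCommGroup X] [NormedSpace ℝ X] (A : Set X) : Prop :=
  IsCompact (closure A)

/-- A sequence is weakly Cauchy if every continuous functional sends it to a convergent sequence. -/
def WeaklyCauchySeq {X : Type*} [SeminormedAddCommGroup X] [NormedSpace ℝ X] (x : ℕ → X) : Prop :=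
  ∀ f : X →L[ℝ] ℝ, ∃ l : ℝ, Tendsto (fun n => f (x n)) atTop (nhds l)

/-- A sequence is weakly null if it converges to `0` in the weak topology. -/
def WeaklyNullSeq {X : Type*} [SeminormedAddCommGroup X] [NormedSpace ℝ X] (x : ℕ → X) : Prop :=
  ∀ f : X →L[ℝ] ℝ, Tendsto (fun n => f (x n)) atTop (nhds 0)

/-- A set is weakly precompact if every sequence in it has a weakly Cauchy subsequence. -/
def WeaklyPrecompact {X : Type*} [SeminormedAddCommGroup X] [NormedSpace ℝ X] (A : Set X) : Prop :=
  ∀ x : ℕ → X, (∀ n, x n ∈ A) → ∃ φ : ℕ → ℕ, StrictMono φ ∧ WeaklyCauchySeq (x ∘ φ)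

/-- A (weakly) compact operator maps the closed unit ball to a relatively (weakly) compact set. -/
def WeaklyCompactOp {X Y : Type*} [SeminormedAddCommGroup X] [NormedSpace ℝ X]
    [SeminormedAddCommGroup Y] [NormedSpace ℝ Y] (T : X →L[ℝ] Y) : Prop :=
  RelWeakCompact Y (T '' Metric.closedBall 0 1)

/-- A sequence is seminormalized if `0 < inf ‖xₙ‖ ≤ sup ‖xₙ‖ < ∞`. -/
def Seminormalized {X : Type*} [NormedAddCommGroup X] (x : ℕ → X) : Prop :=
  ∃ a b : ℝ, 0 < a ∧ ∀ n, a ≤ ‖x n‖ ∧ ‖x n‖ ≤ b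

/-- A sequence `z` in `X` is (a basic sequence) equivalent to the unit vector basis of `ℓp`. -/
def EquivLpBasis (p : ℝ≥0∞) [Fact (1 ≤ p)] {X : Type*} [NormedAddCommGroup X]
    [NormedSpace ℝ X] (z : ℕ → X) : Prop :=
  ∃ C C' : ℝ, 0 < C ∧ 0 < C' ∧ ∀ (s : Finset ℕ) (a : ℕ → ℝ),
    C * ‖∑ n ∈ s, a n • (lp.single p n (1 : ℝ) : lp (fun _ : ℕ => ℝ) p)‖ ≤
        ‖∑ n ∈ s, a n • z n‖ ∧
      ‖∑ n ∈ s, a n • z n‖ ≤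
        C' * ‖∑ n ∈ s, a n • (lp.single p n (1 : ℝ) : lp (fun _ : ℕ => ℝ) p)‖

/-- The closed linear span of the sequence `z` is complemented in `X`. -/
def SpanComplemented {X : Type*} [NormedAddCommGroup X] [NormedSpace ℝ X] (z : ℕ → X) : Prop :=
  ∃ P : X →L[ℝ] X, P.comp P = P ∧
    LinearMap.range P.toLinearMap = (Submodule.span ℝ (Set.range z)).topologicalClosure

/-- Property `(P_p)`: every seminormalized weakly null sequence admits a subsequence which is a
basic sequence equivalent to the unit vector basis of `ℓp` with complemented closed linear span. -/
def PropP (p : ℝ≥0∞) [Fact (1 ≤ p)] (X : Type*) [NormedAddCommGroup X]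
    [NormedSpace ℝ X] : Prop :=
  ∀ x : ℕ → X, Seminormalized x → WeaklyNullSeq x →
    ∃ φ : ℕ → ℕ, StrictMono φ ∧ EquivLpBasis p (x ∘ φ) ∧ SpanComplemented (x ∘ φ)

/-- Property `(R_p)`: for every relatively weakly compact set `A` which is not relatively norm
compact there is an operator `u : X → ℓp` with `u(A)` not relatively norm compact. -/
def PropR (p : ℝ≥0∞) [Fact (1 ≤ p)] (X : Type*) [NormedAddCommGroup X]
    [NormedSpace ℝ X] : Prop :=
  ∀ A : Set X, RelWeakCompact X A → ¬ RelNormCompact X A →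
    ∃ u : X →L[ℝ] lp (fun _ : ℕ => ℝ) p, ¬ RelNormCompact _ (u '' A)

/-!
A relatively weakly compact set `A` that is not relatively norm compact contains an
`ε`-separated sequence `(aₙ)`. Its weak closure is weakly compact and lies in the separable
closed span `Y` of the `aₙ`, where countably many functionals separate points; so it is
metrizable and some subsequence converges weakly to a point `x₀`. The shifted sequence
`aₙ - x₀` is then seminormalized and weakly null, and `(P_p)` gives a further subsequence
`(zₙ)` spanning a complemented copy `M` of `ℓp`, `eₙ ↦ zₙ`. A projection onto `M` followed by
the inverse of this isomorphism is an operator `u` with `u zₙ = eₙ`, so `u(A)` contains the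
`1`-separated points `eₙ + u x₀`.
-/

local notation "ℓ" => lp (fun _ : ℕ => ℝ)

theorem eventually_le_dist_of_pairwise_le_dist {E : Type*} [PseudoMetricSpace E] {a : ℕ → E}
    {ε : ℝ} (hsep : Pairwise fun m n => ε ≤ dist (a m) (a n)) (x : E) :
    ∀ᶠ n in atTop, ε / 2 ≤ dist (a n) x := by
  by_cases hclose : ∃ m, dist (a m) x < ε / 2
  · obtain ⟨m, hm⟩ := hclose
    filter_upwards [eventually_gt_atTop m] with n hn
    linarith [hsep hn.ne', dist_triangle_right (a n) (a m) x]
  · push Not at hclose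
    exact Eventually.of_forall hclose

section Separated

variable {E : Type*} [SeminormedAddCommGroup E] [NormedSpace ℝ E]

theorem exists_pairwise_le_dist_of_not_relNormCompact [CompleteSpace E] {A : Set E}
    (hA : ¬ RelNormCompact E A) :
    ∃ ε > 0, ∃ a : ℕ → E, (∀ n, a n ∈ A) ∧ Pairwise fun m n => ε ≤ dist (a m) (a n) := by
  have hA' : ¬ TotallyBounded A := fun h =>
    hA (isCompact_iff_totallyBounded_isComplete.2 ⟨h.closure, isClosed_closure.isComplete⟩)
  obtain ⟨ε, hε, hnet⟩ : ∃ ε > 0, ∀ t : Set E, t.Finite → ¬ A ⊆ ⋃ y ∈ t, Metric.ball y ε := by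
    simpa [Metric.totallyBounded_iff] using hA'
  have : Std.Symm fun x y : E => ε ≤ dist x y := ⟨fun x y h => (dist_comm y x).trans_ge h⟩
  refine ⟨ε, hε, exists_seq_of_forall_finset_exists' (· ∈ A) (fun x y => ε ≤ dist x y)
    fun t _ => ?_⟩
  obtain ⟨y, hyA, hy⟩ := Set.not_subset.1 (hnet t t.finite_toSet)
  simp only [Set.mem_iUnion, Metric.mem_ball, not_exists, not_lt] at hy
  exact ⟨y, hyA, fun x hx => (dist_comm x y).trans_ge (hy x hx)⟩

theorem not_relNormCompact_of_pairwise_le_dist {A : Set E} {a : ℕ → E} (ha : ∀ n, a n ∈ A)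
    {ε : ℝ} (hε : 0 < ε) (hsep : Pairwise fun m n => ε ≤ dist (a m) (a n)) :
    ¬ RelNormCompact E A := by
  intro hA
  obtain ⟨l, -, φ, hφ, hlim⟩ := hA.tendsto_subseq (x := a) fun n => subset_closure (ha n)
  obtain ⟨N, hN⟩ := Metric.cauchySeq_iff'.1 hlim.cauchySeq ε hε
  exact (hsep (hφ (Nat.lt_succ_self N)).ne').not_gt (hN (N + 1) N.le_succ)

end Separated

theorem lp.one_le_dist_single_one (p : ℝ≥0∞) [Fact (1 ≤ p)] {m n : ℕ} (hmn : m ≠ n) :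
    1 ≤ dist (lp.single p m 1 : ℓ p) (lp.single p n 1) := by
  have hp : p ≠ 0 := (zero_lt_one.trans_le Fact.out).ne'
  have h := lp.norm_apply_le_norm hp (lp.single p m 1 - lp.single p n 1 : ℓ p) m
  rw [lp.coeFn_sub, Pi.sub_apply, lp.single_apply_self, lp.single_apply_ne p n _ hmn] at h
  simpa [dist_eq_norm] using h

section Weak

variable {X : Type*} [NormedAddCommGroup X] [NormedSpace ℝ X]

theorem WeaklyNullSeq.exists_norm_le {y : ℕ → X} (hy : WeaklyNullSeq y) :
    ∃ M, ∀ n, ‖y n‖ ≤ M := by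
  obtain ⟨M, hM⟩ := banach_steinhaus (g := fun n => inclusionInDoubleDual ℝ X (y n)) fun f =>
    let ⟨C, hC⟩ := (hy f).norm.bddAbove_range
    ⟨C, fun n => hC ⟨n, rfl⟩⟩
  exact ⟨M, fun n => ((inclusionInDoubleDualLi ℝ (E := X)).norm_map (y n)).ge.trans (hM n)⟩

theorem Convex.isClosed_toWeakSpace_image {s : Set X} (hs : Convex ℝ s) (hc : IsClosed s) :
    IsClosed (toWeakSpace ℝ X '' s) := by
  rw [← hc.closure_eq, hs.toWeakSpace_closure ℝ]
  exact isClosed_closure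

theorem exists_seq_strongDual_separating {S : Set X} (hS : TopologicalSpace.IsSeparable S) :
    ∃ f : ℕ → StrongDual ℝ X, ∀ y ∈ S, (∀ j, f j y = 0) → y = 0 := by
  obtain ⟨c, hc, hSc⟩ := hS
  obtain ⟨d, hd⟩ := (hc.insert 0).exists_eq_range (Set.insert_nonempty 0 c)
  choose f hf₁ hf₂ using fun j => exists_dual_vector'' ℝ (d j)
  refine ⟨f, fun y hy hfy => norm_le_zero_iff.1 (le_of_forall_pos_le_add fun δ hδ => ?_)⟩
  have hyd : y ∈ closure (Set.range d) := hd ▸ closure_mono (Set.subset_insert 0 c) (hSc hy)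
  obtain ⟨-, ⟨j, rfl⟩, hj⟩ := Metric.mem_closure_iff.1 hyd (δ / 2) (half_pos hδ)
  have hdj : ‖d j‖ ≤ ‖y - d j‖ := by
    calc ‖d j‖ = f j (d j - y) := by simp [hfy j, hf₂]
      _ ≤ ‖f j‖ * ‖d j - y‖ := (Real.le_norm_self _).trans ((f j).le_opNorm _)
      _ ≤ ‖y - d j‖ := by rw [norm_sub_rev]; exact mul_le_of_le_one_left (norm_nonneg _) (hf₁ j)
  rw [dist_eq_norm] at hj
  linarith [norm_le_norm_add_norm_sub' y (d j)]

theorem RelWeakCompact.exists_subseq_weakly_tendsto {A : Set X} (hA : RelWeakCompact X A)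
    {a : ℕ → X} (ha : ∀ n, a n ∈ A) :
    ∃ x₀ : X, ∃ φ : ℕ → ℕ, StrictMono φ ∧
      ∀ f : StrongDual ℝ X, Tendsto (fun n => f (a (φ n))) atTop (𝓝 (f x₀)) := by
  set S := Submodule.span ℝ (Set.range a)
  set Y := S.topologicalClosure
  have hYsep : TopologicalSpace.IsSeparable (Y : Set X) := by
    simpa [Y, S, Submodule.topologicalClosure_coe] using
      ((Set.countable_range a).isSeparable.span (R := ℝ)).closure
  obtain ⟨f, hf⟩ := exists_seq_strongDual_separating hYsep
  set K := closure (toWeakSpace ℝ X '' Set.range a)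
  have hK : IsCompact K := hA.of_isClosed_subset isClosed_closure
    (closure_mono (Set.image_mono (Set.range_subset_iff.2 ha)))
  have hKY : K ⊆ toWeakSpace ℝ X '' Y := by
    refine closure_minimal ?_ (Y.convex.isClosed_toWeakSpace_image S.isClosed_topologicalClosure)
    rintro - ⟨-, ⟨n, rfl⟩, rfl⟩
    exact ⟨a n, S.le_topologicalClosure (Submodule.subset_span ⟨n, rfl⟩), rfl⟩
  have : CompactSpace K := isCompact_iff_compactSpace.1 hK
  have : TopologicalSpace.MetrizableSpace K := by
    refine Metric.PiNatEmbed.TopologicalSpace.MetrizableSpace.of_countable_separating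
      (fun j (k : K) => (topDualPairing ℝ X).flip (k : WeakSpace ℝ X) (f j))
      (fun j => (WeakBilin.eval_continuous _ (f j)).comp continuous_subtype_val) ?_
    rintro ⟨k₁, hk₁⟩ ⟨k₂, hk₂⟩ hne
    obtain ⟨y₁, hy₁, rfl⟩ := hKY hk₁
    obtain ⟨y₂, hy₂, rfl⟩ := hKY hk₂
    by_contra! hsame
    have hy : y₁ - y₂ = 0 := hf _ (Y.sub_mem hy₁ hy₂) fun j => by
      rw [map_sub, sub_eq_zero]
      exact hsame j
    exact hne (Subtype.ext (congrArg (toWeakSpace ℝ X) (sub_eq_zero.1 hy)))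
  obtain ⟨l, φ, hφ, hl⟩ := CompactSpace.tendsto_subseq
    fun n => (⟨toWeakSpace ℝ X (a n), subset_closure ⟨a n, ⟨n, rfl⟩, rfl⟩⟩ : K)
  exact ⟨(toWeakSpace ℝ X).symm l, φ, hφ, fun g =>
    ((WeakBilin.eval_continuous _ g).tendsto _).comp ((continuous_subtype_val.tendsto l).comp hl)⟩

end Weak

section Series

variable {ι E F : Type*} [SeminormedAddCommGroup E] [SeminormedAddCommGroup F]

theorem summable_of_norm_sum_le_mul [CompleteSpace E] {f : ι → E} {g : ι → F} (hg : Summable g)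
    {c : ℝ} (h : ∀ s : Finset ι, ‖∑ i ∈ s, f i‖ ≤ c * ‖∑ i ∈ s, g i‖) : Summable f := by
  have hc : 0 < |c| + 1 := by positivity
  refine summable_iff_vanishing_norm.2 fun ε hε => ?_
  obtain ⟨s, hs⟩ := hg.vanishing (Metric.ball_mem_nhds 0 (div_pos hε hc))
  refine ⟨s, fun t ht => (h t).trans_lt ?_⟩
  calc c * ‖∑ i ∈ t, g i‖ ≤ (|c| + 1) * ‖∑ i ∈ t, g i‖ :=
        mul_le_mul_of_nonneg_right (by linarith [le_abs_self c]) (norm_nonneg _)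
    _ < (|c| + 1) * (ε / (|c| + 1)) := mul_lt_mul_of_pos_left (mem_ball_zero_iff.1 (hs t ht)) hc
    _ = ε := mul_div_cancel₀ ε hc.ne'

theorem norm_le_mul_norm_of_hasSum {f : ι → E} {g : ι → F} {x : E} {y : F} (hf : HasSum f x)
    (hg : HasSum g y) {c : ℝ} (h : ∀ s : Finset ι, ‖∑ i ∈ s, f i‖ ≤ c * ‖∑ i ∈ s, g i‖) :
    ‖x‖ ≤ c * ‖y‖ :=
  le_of_tendsto_of_tendsto' hf.norm (hg.norm.const_mul c) h

end Series

section Synthesis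

variable {p : ℝ≥0∞} [Fact (1 ≤ p)] {X : Type*} [NormedAddCommGroup X] [NormedSpace ℝ X]

omit [Fact (1 ≤ p)] in
theorem lp.smul_single_one (n : ℕ) (c : ℝ) : c • (lp.single p n 1 : ℓ p) = lp.single p n c := by
  rw [← lp.single_smul, smul_eq_mul, mul_one]

theorem exists_lp_clm_hasSum [CompleteSpace X] (hp : p ≠ ⊤) {z : ℕ → X} {C : ℝ}
    (hz : ∀ (s : Finset ℕ) (a : ℕ → ℝ),
      ‖∑ n ∈ s, a n • z n‖ ≤ C * ‖∑ n ∈ s, (lp.single p n (a n) : ℓ p)‖) :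
    ∃ T : ℓ p →L[ℝ] X, ∀ a : ℓ p, HasSum (fun n => a n • z n) (T a) := by
  have hsum (a : ℓ p) : HasSum (fun n => a n • z n) (∑' n, a n • z n) :=
    (summable_of_norm_sum_le_mul (lp.hasSum_single hp a).summable (hz · a)).hasSum
  let T : ℓ p →ₗ[ℝ] X :=
    { toFun a := ∑' n, a n • z n
      map_add' a b := by
        simpa only [lp.coeFn_add, Pi.add_apply, add_smul] using ((hsum a).add (hsum b)).tsum_eq
      map_smul' c a := by
        simpa only [lp.coeFn_smul, Pi.smul_apply, smul_eq_mul, mul_smul, RingHom.id_apply] using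
          ((hsum a).const_smul c).tsum_eq }
  exact ⟨T.mkContinuous C fun a =>
    norm_le_mul_norm_of_hasSum (hsum a) (lp.hasSum_single hp a) (hz · a), hsum⟩

theorem EquivLpBasis.exists_antilipschitz_lp_clm [CompleteSpace X] (hp : p ≠ ⊤) {z : ℕ → X}
    (hz : EquivLpBasis p z) :
    ∃ T : ℓ p →L[ℝ] X, (∃ K, AntilipschitzWith K T) ∧ ∀ n, T (lp.single p n 1) = z n := by
  obtain ⟨C, C', hC, -, hz⟩ := hz
  simp only [lp.smul_single_one] at hz
  obtain ⟨T, hT⟩ := exists_lp_clm_hasSum hp fun s a => (hz s a).2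
  refine ⟨T, ⟨Real.toNNReal C⁻¹, T.antilipschitz_of_bound fun a => ?_⟩, fun n => ?_⟩
  · rw [Real.coe_toNNReal _ (inv_nonneg.2 hC.le)]
    exact norm_le_mul_norm_of_hasSum (lp.hasSum_single hp a) (hT a) fun s =>
      (le_inv_mul_iff₀ hC).2 (hz s a).1
  · refine (hT _).unique ?_
    simpa [lp.single_apply_self] using
      hasSum_single (f := fun m => (lp.single p n 1 : ℓ p) m • z m) n fun m hm => by simp [hm]

end Synthesis

theorem exists_clm_lp_apply_eq_single {p : ℝ≥0∞} [Fact (1 ≤ p)] (hp : p ≠ ⊤) {X : Type*}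
    [NormedAddCommGroup X] [NormedSpace ℝ X] [CompleteSpace X] {z : ℕ → X}
    (hb : EquivLpBasis p z) (hc : SpanComplemented z) :
    ∃ u : X →L[ℝ] ℓ p, ∀ n, u (z n) = lp.single p n 1 := by
  obtain ⟨T, ⟨K, hK⟩, hTz⟩ := hb.exists_antilipschitz_lp_clm hp
  obtain ⟨P, hPP, hPz⟩ := hc
  have hTclosed : IsClosed (Set.range T) := hK.isClosed_range T.uniformContinuous
  have hPT : LinearMap.range P.toLinearMap ≤ (T : ℓ p →ₗ[ℝ] X).range := by
    rw [hPz]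
    refine Submodule.topologicalClosure_minimal _ (Submodule.span_le.2 ?_) hTclosed
    rintro - ⟨n, rfl⟩
    exact ⟨_, hTz n⟩
  have hPzn (n : ℕ) : P (z n) = z n := by
    obtain ⟨w, hw⟩ : z n ∈ LinearMap.range P.toLinearMap :=
      hPz ▸ Submodule.le_topologicalClosure _ (Submodule.subset_span ⟨n, rfl⟩)
    simpa [← hw] using DFunLike.congr_fun hPP w
  refine ⟨(T.equivRange hK.injective hTclosed).symm.toContinuousLinearMap.comp
    (P.codRestrict _ fun x => hPT ⟨x, rfl⟩), fun n => ?_⟩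
  rw [ContinuousLinearMap.comp_apply, ContinuousLinearEquiv.coe_coe,
    ContinuousLinearEquiv.symm_apply_eq]
  ext1
  simp [hPzn, hTz]

theorem stmt10_general (p : ℝ≥0∞) [Fact (1 ≤ p)] (hp' : p ≠ ⊤)
    {X : Type*} [NormedAddCommGroup X] [NormedSpace ℝ X] [CompleteSpace X] (h : PropP p X) : PropR p X := by
  intro A hwA hnA
  obtain ⟨ε, hε, a, haA, hsep⟩ := exists_pairwise_le_dist_of_not_relNormCompact hnA
  obtain ⟨x₀, φ, hφ, hconv⟩ := hwA.exists_subseq_weakly_tendsto haA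
  obtain ⟨N, hN⟩ := eventually_atTop.1
    (hφ.tendsto_atTop.eventually (eventually_le_dist_of_pairwise_le_dist hsep x₀))
  set y : ℕ → X := fun n => a (φ (n + N)) - x₀
  have hy0 : WeaklyNullSeq y := fun f => by
    simpa [y] using ((hconv f).comp (tendsto_add_atTop_nat N)).sub_const (f x₀)
  have hy : Seminormalized y := by
    obtain ⟨M, hM⟩ := hy0.exists_norm_le
    exact ⟨ε / 2, M, half_pos hε, fun n =>
      ⟨(hN _ (Nat.le_add_left N n)).trans_eq (dist_eq_norm _ _), hM n⟩⟩
  obtain ⟨ψ, -, hbasis, hcompl⟩ := h y hy hy0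
  obtain ⟨u, hu⟩ := exists_clm_lp_apply_eq_single hp' hbasis hcompl
  have hua (n : ℕ) : u (a (φ (ψ n + N))) = lp.single p n 1 + u x₀ := by
    rw [← hu n, ← map_add]
    simp [y]
  refine ⟨u, not_relNormCompact_of_pairwise_le_dist (fun n => ⟨_, haA _, hua n⟩) one_pos
    fun m n hmn => ?_⟩
  simpa [dist_add_right] using lp.one_le_dist_single_one p hmn

theorem stmt10 (p : ℝ≥0∞) [Fact (1 ≤ p)] (hp : 1 < p) (hp' : p ≠ ⊤)
    {X : Type*} [NormedAddCommGroup X] [NormedSpace ℝ X] [CompleteSpace X] (h : PropP p X) : PropR p X :=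
  stmt10_general p hp' h
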